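/- Let G be a group, A an abelian group, α : G³ → A a group 3-cocycle, ρ : Γ → G a homomorphism, h ∈ G, and ρ'(a) = h·ρ(a)·h⁻¹. Suppose γ : Γ² → A is a 2-cochain with dγ = ρ*α. Define β(a,b) = α(h,ρ(a),ρ(b))·α(ρ'(a),ρ'(b),h)·α(ρ'(a),h,ρ(b))⁻¹ and set ᵸγ(a,b) = γ(a,b)/β(a,b). Then d(ᵸγ) = ρ'*α. -/

import Mathlib

/-!
Conjugation by `h` acts trivially on group cohomology, and `β` is an explicit witness: for a
3-cocycle `α`, four instances of the cocycle identity (at `(h, x, y, z)`, `(x', h, y, z)`,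
`(x', y', h, z)` and `(x', y', z', h)`, primes denoting conjugates by `h`) combine to
`dβ = α / c_h*α`. Pulling back along `ρ` and dividing `γ` by `ρ*β` turns `dγ = ρ*α` into
`d(γ / ρ*β) = ρ*α / ρ*(α / c_h*α) = ρ'*α`.
-/

namespace GroupCochain

variable {G Γ A : Type*} [Group G] [Group Γ] [CommGroup A]

def coboundary₂ (γ : Γ → Γ → A) (a b c : Γ) : A :=
  γ b c * (γ (a * b) c)⁻¹ * γ a (b * c) * (γ a b)⁻¹

def IsCocycle₃ (α : G → G → G → A) : Prop :=
  ∀ g₁ g₂ g₃ g₄ : G,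
    α g₂ g₃ g₄ * (α (g₁ * g₂) g₃ g₄)⁻¹ * α g₁ (g₂ * g₃) g₄ *
      (α g₁ g₂ (g₃ * g₄))⁻¹ * α g₁ g₂ g₃ = 1

def conjCochain (α : G → G → G → A) (h x y : G) : A :=
  α h x y * α (h * x * h⁻¹) (h * y * h⁻¹) h * (α (h * x * h⁻¹) h y)⁻¹

theorem coboundary₂_div (γ β : Γ → Γ → A) (a b c : Γ) :
    coboundary₂ (fun a b ↦ γ a b / β a b) a b c = coboundary₂ γ a b c / coboundary₂ β a b c := by
  simp only [coboundary₂, div_eq_mul_inv, mul_inv, inv_inv, mul_comm, mul_assoc, mul_left_comm]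

theorem coboundary₂_comp_monoidHom (β : G → G → A) (ρ : Γ →* G) (a b c : Γ) :
    coboundary₂ (fun a b ↦ β (ρ a) (ρ b)) a b c = coboundary₂ β (ρ a) (ρ b) (ρ c) := by
  simp only [coboundary₂, map_mul]

theorem IsCocycle₃.coboundary₂_conjCochain {α : G → G → G → A} (hα : IsCocycle₃ α)
    (h x y z : G) :
    coboundary₂ (conjCochain α h) x y z =
      α x y z / α (h * x * h⁻¹) (h * y * h⁻¹) (h * z * h⁻¹) := by
  have H₁ := congrArg Additive.ofMul (hα h x y z)
  have H₂ := congrArg Additive.ofMul (hα (h * x * h⁻¹) h y z)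
  have H₃ := congrArg Additive.ofMul (hα (h * x * h⁻¹) (h * y * h⁻¹) h z)
  have H₄ := congrArg Additive.ofMul (hα (h * x * h⁻¹) (h * y * h⁻¹) (h * z * h⁻¹) h)
  apply Additive.ofMul.injective
  simp only [coboundary₂, conjCochain, mul_assoc, inv_mul_cancel_left, inv_mul_cancel, mul_one,
    ofMul_mul, ofMul_inv, ofMul_div, ofMul_one] at H₁ H₂ H₃ H₄ ⊢
  linear_combination (norm := abel) H₂ - H₁ - H₃ + H₄

end GroupCochain

open GroupCochain

/-- If `dγ = ρ*α` and `ᵸγ = γ/β` for the explicit 2-cochain `β` associated to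
conjugation by `h`, then `d(ᵸγ) = ρ'*α` for the conjugate homomorphism `ρ'`. -/
theorem conjugated_cochain_trivializes_conjugated_pullback
    {G Γ A : Type*} [Group G] [Group Γ] [CommGroup A]
    (α : G → G → G → A)
    (hα : ∀ g₁ g₂ g₃ g₄ : G,
      α g₂ g₃ g₄ * (α (g₁ * g₂) g₃ g₄)⁻¹ * α g₁ (g₂ * g₃) g₄ *
        (α g₁ g₂ (g₃ * g₄))⁻¹ * α g₁ g₂ g₃ = 1)
    (ρ : Γ →* G) (h : G) (ρ' : Γ → G)
    (hρ' : ∀ a, ρ' a = h * ρ a * h⁻¹)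
    (γ : Γ → Γ → A)
    (hγ : ∀ a b c : Γ,
      γ b c * (γ (a * b) c)⁻¹ * γ a (b * c) * (γ a b)⁻¹ = α (ρ a) (ρ b) (ρ c))
    (β : Γ → Γ → A)
    (hβ : ∀ a b, β a b = α h (ρ a) (ρ b) * α (ρ' a) (ρ' b) h * (α (ρ' a) h (ρ b))⁻¹)
    (hγ' : Γ → Γ → A)
    (hhγ' : ∀ a b, hγ' a b = γ a b / β a b) :
    ∀ a b c : Γ,
      hγ' b c * (hγ' (a * b) c)⁻¹ * hγ' a (b * c) * (hγ' a b)⁻¹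
        = α (ρ' a) (ρ' b) (ρ' c) := by
  have hγ'_eq : hγ' = fun a b ↦ γ a b / conjCochain α h (ρ a) (ρ b) := by
    funext a b
    rw [hhγ', hβ, hρ', hρ', conjCochain]
  intro a b c
  change coboundary₂ hγ' a b c = _
  rw [hγ'_eq, coboundary₂_div, coboundary₂_comp_monoidHom,
    IsCocycle₃.coboundary₂_conjCochain hα,
    show coboundary₂ γ a b c = α (ρ a) (ρ b) (ρ c) from hγ a b c, div_div_cancel, hρ', hρ', hρ']
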